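/- Let (A,·) and (B,∘) be left-symmetric algebras with linear maps l_A,r_A : A → gl(B) and l_B,r_B : B → gl(A) such that (l_A,r_A) is a bimodule of A and (l_B,r_B) is a bimodule of B, satisfying the four compatibility conditions (3.6)-(3.9) of a matched pair of left-symmetric algebras. Then the product (x+a)*(y+b) = (x·y + l_B(a)y + r_B(b)x) + (a∘b + l_A(x)b + r_A(y)a) defines a left-symmetric algebra structure on A ⊕ B. -/

import Mathlib

/-- The product on A ⊕ B associated to a matched pair of left-symmetric algebras:
(x+a)*(y+b) = (x·y + l_B(a)y + r_B(b)x) + (a∘b + l_A(x)b + r_A(y)a). -/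
def mpProd {F : Type*} [Field F] {A : Type*} [AddCommGroup A] [Module F A]
    {B : Type*} [AddCommGroup B] [Module F B]
    (mulA : A →ₗ[F] A →ₗ[F] A) (mulB : B →ₗ[F] B →ₗ[F] B)
    (lA rA : A →ₗ[F] B →ₗ[F] B) (lB rB : B →ₗ[F] A →ₗ[F] A)
    (p q : A × B) : A × B :=
  (mulA p.1 q.1 + lB p.2 q.1 + rB q.2 p.1, mulB p.2 q.2 + lA p.1 q.2 + rA q.1 p.2)

/-!
The `A`-component of the left-symmetry identity on `A ⊕ B` is a linear combination of the
left-symmetry of `A`, the bimodule identities of `(l_B, r_B)` and the compatibility conditions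
(3.8)-(3.9). Exchanging the roles of `A` and `B` turns (3.6)-(3.7) into (3.8)-(3.9) and swaps the
two components of the product, so the `B`-component is the same identity for the exchanged
matched pair.
-/

section MatchedPair

variable {F : Type*} [Field F] {A : Type*} [AddCommGroup A] [Module F A]
  {B : Type*} [AddCommGroup B] [Module F B]
  (mulA : A →ₗ[F] A →ₗ[F] A) (mulB : B →ₗ[F] B →ₗ[F] B)
  (lA rA : A →ₗ[F] B →ₗ[F] B) (lB rB : B →ₗ[F] A →ₗ[F] A)

theorem mpProd_swap (p q : A × B) :
    mpProd mulB mulA lB rB lA rA p.swap q.swap = (mpProd mulA mulB lA rA lB rB p q).swap :=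
  rfl

theorem mpProd_leftSymm_fst
    (hlsA : ∀ x y z : A,
      mulA (mulA x y) z - mulA x (mulA y z) = mulA (mulA y x) z - mulA y (mulA x z))
    (hbB1 : ∀ (a b : B) (x : A),
      lB a (lB b x) - lB (mulB a b) x = lB b (lB a x) - lB (mulB b a) x)
    (hbB2 : ∀ (a b : B) (x : A),
      lB a (rB b x) - rB b (lB a x) = rB (mulB a b) x - rB b (rB a x))
    (h38 : ∀ (a : B) (x y : A),
      rB a (mulA x y - mulA y x)
      = rB (lA y a) x - rB (lA x a) y + mulA x (rB a y) - mulA y (rB a x))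
    (h39 : ∀ (a : B) (x y : A),
      lB a (mulA x y)
      = -lB (lA x a - rA x a) y + mulA (lB a x - rB a x) y
        + rB (rA y a) x + mulA x (lB a y))
    (p q r : A × B) :
    (mpProd mulA mulB lA rA lB rB (mpProd mulA mulB lA rA lB rB p q) r
      - mpProd mulA mulB lA rA lB rB p (mpProd mulA mulB lA rA lB rB q r)).1
    = (mpProd mulA mulB lA rA lB rB (mpProd mulA mulB lA rA lB rB q p) r
      - mpProd mulA mulB lA rA lB rB q (mpProd mulA mulB lA rA lB rB p r)).1 := by
  obtain ⟨x, a⟩ := p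
  obtain ⟨y, b⟩ := q
  obtain ⟨z, c⟩ := r
  simp only [map_sub, LinearMap.sub_apply] at h38 h39
  simp only [mpProd, Prod.fst_sub, map_add, LinearMap.add_apply]
  linear_combination (norm := abel)
    hlsA x y z + h38 c x y - hbB1 a b z + hbB2 b c x - hbB2 a c y + h39 b x z - h39 a y z

end MatchedPair

theorem matched_pair_lsym (F : Type*) [Field F]
    (A : Type*) [AddCommGroup A] [Module F A]
    (B : Type*) [AddCommGroup B] [Module F B]
    (mulA : A →ₗ[F] A →ₗ[F] A) (mulB : B →ₗ[F] B →ₗ[F] B)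
    (lA rA : A →ₗ[F] B →ₗ[F] B) (lB rB : B →ₗ[F] A →ₗ[F] A)
    (hlsA : ∀ x y z : A,
      mulA (mulA x y) z - mulA x (mulA y z) = mulA (mulA y x) z - mulA y (mulA x z))
    (hlsB : ∀ a b c : B,
      mulB (mulB a b) c - mulB a (mulB b c) = mulB (mulB b a) c - mulB b (mulB a c))
    (hbA1 : ∀ (x y : A) (b : B),
      lA x (lA y b) - lA (mulA x y) b = lA y (lA x b) - lA (mulA y x) b)
    (hbA2 : ∀ (x y : A) (b : B),
      lA x (rA y b) - rA y (lA x b) = rA (mulA x y) b - rA y (rA x b))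
    (hbB1 : ∀ (a b : B) (x : A),
      lB a (lB b x) - lB (mulB a b) x = lB b (lB a x) - lB (mulB b a) x)
    (hbB2 : ∀ (a b : B) (x : A),
      lB a (rB b x) - rB b (lB a x) = rB (mulB a b) x - rB b (rB a x))
    (h36 : ∀ (x : A) (a b : B),
      rA x (mulB a b - mulB b a)
      = rA (lB b x) a - rA (lB a x) b + mulB a (rA x b) - mulB b (rA x a))
    (h37 : ∀ (x : A) (a b : B),
      lA x (mulB a b)
      = -lA (lB a x - rB a x) b + mulB (lA x a - rA x a) b
        + rA (rB b x) a + mulB a (lA x b))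
    (h38 : ∀ (a : B) (x y : A),
      rB a (mulA x y - mulA y x)
      = rB (lA y a) x - rB (lA x a) y + mulA x (rB a y) - mulA y (rB a x))
    (h39 : ∀ (a : B) (x y : A),
      lB a (mulA x y)
      = -lB (lA x a - rA x a) y + mulA (lB a x - rB a x) y
        + rB (rA y a) x + mulA x (lB a y)) :
    ∀ p q r : A × B,
      mpProd mulA mulB lA rA lB rB (mpProd mulA mulB lA rA lB rB p q) r
        - mpProd mulA mulB lA rA lB rB p (mpProd mulA mulB lA rA lB rB q r)
      = mpProd mulA mulB lA rA lB rB (mpProd mulA mulB lA rA lB rB q p) r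
        - mpProd mulA mulB lA rA lB rB q (mpProd mulA mulB lA rA lB rB p r) := by
  intro p q r
  have hsnd := mpProd_leftSymm_fst mulB mulA lB rB lA rA hlsB hbA1 hbA2 h36 h37
    p.swap q.swap r.swap
  simp only [mpProd_swap, Prod.fst_sub, Prod.fst_swap] at hsnd
  exact Prod.ext (mpProd_leftSymm_fst mulA mulB lA rA lB rB hlsA hbB1 hbB2 h38 h39 p q r)
    (by simpa only [Prod.snd_sub] using hsnd)
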